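/- Let Π be a polar space of rank n ≥ 3 of type D, let 0 ≤ k ≤ n−2, let B = {p_1, …, p_{2n}} be a base of Π and 𝓑 the associated base subset of G_k. For every i ∈ {1, …, 2n}, the subset 𝓑(−i) is exact. -/

import Mathlib

/- Common framework: polar spaces of rank `n`, singular subspaces, projective
dimension, Grassmannians, bases and base subsets, inexact/complement subsets,
following Pankov, "Base subsets of polar Grassmannians". -/

namespace PolarGeo

variable {P : Type*}

/-- The (reflexive) collinearity relation determined by a family of lines. -/
def Col (lines : Set (Set P)) (p q : P) : Prop :=
  p = q ∨ ∃ L ∈ lines, p ∈ L ∧ q ∈ L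

/-- `S` is a subspace: it contains every line through two of its distinct
collinear points. -/
def IsSubspace (lines : Set (Set P)) (S : Set P) : Prop :=
  ∀ p ∈ S, ∀ q ∈ S, p ≠ q → ∀ L ∈ lines, p ∈ L → q ∈ L → L ⊆ S

/-- A singular subspace: a subspace whose points are mutually collinear. -/
def IsSingular (lines : Set (Set P)) (S : Set P) : Prop :=
  IsSubspace lines S ∧ ∀ p ∈ S, ∀ q ∈ S, Col lines p q

/-- A flag: a chain of nonempty singular subspaces. -/
def IsFlag (lines : Set (Set P)) (C : Set (Set P)) : Prop :=
  IsChain (· ⊆ ·) C ∧ ∀ T ∈ C, IsSingular lines T ∧ T.Nonempty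

/-- A polar space of rank `n` on the point set `P`: a partial linear space
such that every point is collinear with one or all points of every line, no
point is collinear with all others, and every maximal flag of singular
subspaces consists of `n` elements. -/
structure PolarSpace (P : Type*) (n : ℕ) where
  lines : Set (Set P)
  line_proper : ∀ L ∈ lines, L ≠ (Set.univ : Set P)
  line_two : ∀ L ∈ lines, ∃ p ∈ L, ∃ q ∈ L, p ≠ q
  point_on_line : ∀ p : P, ∃ L ∈ lines, p ∈ L
  unique_line : ∀ p q : P, p ≠ q → ∀ L₁ ∈ lines, ∀ L₂ ∈ lines,
    p ∈ L₁ → q ∈ L₁ → p ∈ L₂ → q ∈ L₂ → L₁ = L₂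
  one_or_all : ∀ p : P, ∀ L ∈ lines,
    (∃! q, q ∈ L ∧ Col lines p q) ∨ ∀ q ∈ L, Col lines p q
  no_center : ∀ p : P, ∃ q : P, ¬ Col lines p q
  flag_card : ∀ C : Set (Set P), IsFlag lines C →
    (∀ C', IsFlag lines C' → C ⊆ C' → C = C') → C.ncard = n

/-- A flag all of whose members are contained in `S`. -/
def IsFlagIn (lines : Set (Set P)) (S : Set P) (C : Set (Set P)) : Prop :=
  IsFlag lines C ∧ ∀ T ∈ C, T ⊆ S

/-- `S` is a singular subspace of projective dimension `m` (so `dim ∅ = -1`):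
a maximal chain of nonempty singular subspaces contained in `S` has `m + 1`
members. -/
def HasDim (lines : Set (Set P)) (S : Set P) (m : ℤ) : Prop :=
  IsSingular lines S ∧ ∃ C : Set (Set P), IsFlagIn lines S C ∧
    (∀ C', IsFlagIn lines S C' → C ⊆ C' → C = C') ∧
    C.Finite ∧ (C.ncard : ℤ) = m + 1

/-- The Grassmannian `G_m` of `m`-dimensional singular subspaces. -/
def Gdim (lines : Set (Set P)) (m : ℤ) : Set (Set P) := {S | HasDim lines S m}

/-- The span of `X`: the smallest subspace containing `X`. -/
def span (lines : Set (Set P)) (X : Set P) : Set P :=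
  ⋂₀ {S : Set P | IsSubspace lines S ∧ X ⊆ S}

/-- `X ⊥`: the set of points collinear with every point of `X`. -/
def perp (lines : Set (Set P)) (X : Set P) : Set P :=
  {y | ∀ x ∈ X, Col lines x y}

/-- A base of the polar space: `2n` points each of which is non-collinear
with exactly one of them. -/
def IsBase (lines : Set (Set P)) {n : ℕ} (p : Fin (2 * n) → P) : Prop :=
  Function.Injective p ∧ ∀ i, ∃! j, ¬ Col lines (p i) (p j)

/-- The base subset of `G_k` associated with a base: all `k`-dimensional
singular subspaces spanned by points of the base. -/
def baseSubset (lines : Set (Set P)) {n : ℕ} (p : Fin (2 * n) → P) (k : ℤ) :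
    Set (Set P) :=
  {S | HasDim lines S k ∧ ∃ I : Set (Fin (2 * n)), S = span lines (p '' I)}

/-- `𝓑(+x)`: the elements of `𝓑` containing the point `x`. -/
def plus (𝓑 : Set (Set P)) (x : P) : Set (Set P) := {S ∈ 𝓑 | x ∈ S}

/-- `𝓑(-x)`: the elements of `𝓑` not containing the point `x`. -/
def minus (𝓑 : Set (Set P)) (x : P) : Set (Set P) := {S ∈ 𝓑 | x ∉ S}

/-- `R ⊆ 𝓑` is inexact: some base subset of `G_k` different from `𝓑`
contains `R`. -/
def IsInexact (lines : Set (Set P)) (n : ℕ) (k : ℤ) (𝓑 R : Set (Set P)) : Prop :=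
  R ⊆ 𝓑 ∧ ∃ p' : Fin (2 * n) → P, IsBase lines p' ∧
    R ⊆ baseSubset lines p' k ∧ baseSubset lines p' k ≠ 𝓑

/-- `R ⊆ 𝓑` is exact: `𝓑` is the only base subset of `G_k` containing `R`. -/
def IsExact (lines : Set (Set P)) (n : ℕ) (k : ℤ) (𝓑 R : Set (Set P)) : Prop :=
  R ⊆ 𝓑 ∧ ∀ p' : Fin (2 * n) → P, IsBase lines p' →
    R ⊆ baseSubset lines p' k → baseSubset lines p' k = 𝓑

/-- A maximal inexact subset of `𝓑`. -/
def IsMaxInexact (lines : Set (Set P)) (n : ℕ) (k : ℤ) (𝓑 R : Set (Set P)) : Prop :=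
  IsInexact lines n k 𝓑 R ∧ ∀ R', IsInexact lines n k 𝓑 R' → R ⊆ R' → R = R'

/-- A complement subset of `𝓑`: the complement of a maximal inexact subset. -/
def IsComplement (lines : Set (Set P)) (n : ℕ) (k : ℤ) (𝓑 R : Set (Set P)) : Prop :=
  R ⊆ 𝓑 ∧ IsMaxInexact lines n k 𝓑 (𝓑 \ R)

/-- Type `C`: every `(n-2)`-dimensional singular subspace is contained in at
least `3` maximal singular subspaces. -/
def TypeC (lines : Set (Set P)) (n : ℕ) : Prop :=
  ∀ S ∈ Gdim lines ((n : ℤ) - 2), ∃ M₁ ∈ Gdim lines ((n : ℤ) - 1),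
    ∃ M₂ ∈ Gdim lines ((n : ℤ) - 1), ∃ M₃ ∈ Gdim lines ((n : ℤ) - 1),
      M₁ ≠ M₂ ∧ M₁ ≠ M₃ ∧ M₂ ≠ M₃ ∧ S ⊆ M₁ ∧ S ⊆ M₂ ∧ S ⊆ M₃

/-- Type `D`: every `(n-2)`-dimensional singular subspace is contained in
exactly `2` maximal singular subspaces. -/
def TypeD (lines : Set (Set P)) (n : ℕ) : Prop :=
  ∀ S ∈ Gdim lines ((n : ℤ) - 2),
    {M | M ∈ Gdim lines ((n : ℤ) - 1) ∧ S ⊆ M}.ncard = 2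

/-- A collineation of a point-line geometry on the whole type: a bijection
preserving the family of lines in both directions. -/
def IsCollineation (lines : Set (Set P)) (f : P → P) : Prop :=
  Function.Bijective f ∧ ∀ L : Set P, L ∈ lines ↔ f '' L ∈ lines

/-- A collineation of a partial linear space whose point set is the subset
`pts` of `X`: a bijection of `pts` mapping the family of lines onto itself in
both directions. -/
def IsCollineationOn {X : Type*} (pts : Set X) (lns : Set (Set X)) (f : X → X) : Prop :=
  Set.BijOn f pts pts ∧ (∀ ℓ ∈ lns, f '' ℓ ∈ lns) ∧
    (∀ ℓ ∈ lns, ∃ ℓ' ∈ lns, f '' ℓ' = ℓ)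

/-- Lines of the Grassmann space `𝔊_k`. For `k ≤ n - 2` a line is given by
incident `S ∈ G_{k-1}`, `U ∈ G_{k+1}` (for `k = 0` this is the shadow of an
element of `G_1`); for `k = n - 1` a line is given by an element of
`G_{n-2}`. -/
def grassLines (lines : Set (Set P)) (n k : ℕ) : Set (Set (Set P)) :=
  if k = n - 1 then
    {ℓ | ∃ S ∈ Gdim lines ((n : ℤ) - 2),
      ℓ = {T | T ∈ Gdim lines ((n : ℤ) - 1) ∧ S ⊆ T}}
  else
    {ℓ | ∃ S ∈ Gdim lines ((k : ℤ) - 1), ∃ U ∈ Gdim lines ((k : ℤ) + 1),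
      S ⊆ U ∧ ℓ = {T | T ∈ Gdim lines (k : ℤ) ∧ S ⊆ T ∧ T ⊆ U}}

/-- Collinearity of distinct points of `𝔊_k` for `k ≤ n - 2`: `S ⊥ U` and
the span of `S ∪ U` is `(k+1)`-dimensional. -/
def GColl (lines : Set (Set P)) (k : ℤ) (S U : Set P) : Prop :=
  S ≠ U ∧ (∀ a ∈ S, ∀ b ∈ U, Col lines a b) ∧
    span lines (S ∪ U) ∈ Gdim lines (k + 1)

/-- Weak adjacency in `G_k`: the intersection is `(k-1)`-dimensional. -/
def WeakAdj (lines : Set (Set P)) (k : ℤ) (S U : Set P) : Prop :=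
  S ∩ U ∈ Gdim lines (k - 1)

/-- The complement subset `C_{ij} = 𝓑(+i,-j) ∪ 𝓑(+σ(j),-σ(i))` of second
type. -/
def Cij (lines : Set (Set P)) {n : ℕ} (p : Fin (2 * n) → P)
    (σ : Fin (2 * n) → Fin (2 * n)) (k : ℤ) (i j : Fin (2 * n)) : Set (Set P) :=
  (plus (baseSubset lines p k) (p i) ∩ minus (baseSubset lines p k) (p j)) ∪
  (plus (baseSubset lines p k) (p (σ j)) ∩ minus (baseSubset lines p k) (p (σ i)))

/-- The inexact subset
`R_{ij} = 𝓑(+i,+j) ∪ 𝓑(+σ(i),+σ(j)) ∪ 𝓑(-i,-σ(j))` of second type. -/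
def Rij (lines : Set (Set P)) {n : ℕ} (p : Fin (2 * n) → P)
    (σ : Fin (2 * n) → Fin (2 * n)) (k : ℤ) (i j : Fin (2 * n)) : Set (Set P) :=
  (plus (baseSubset lines p k) (p i) ∩ plus (baseSubset lines p k) (p j)) ∪
  (plus (baseSubset lines p k) (p (σ i)) ∩ plus (baseSubset lines p k) (p (σ j))) ∪
  (minus (baseSubset lines p k) (p i) ∩ minus (baseSubset lines p k) (p (σ j)))

/-- `c(S,U)`: the number of complement subsets of second type of the base
subset containing both `S` and `U`. -/
noncomputable def cCount (lines : Set (Set P)) {n : ℕ} (p : Fin (2 * n) → P)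
    (σ : Fin (2 * n) → Fin (2 * n)) (k : ℤ) (S U : Set P) : ℕ :=
  {R : Set (Set P) | (∃ i j, j ≠ i ∧ j ≠ σ i ∧ R = Cij lines p σ k i j) ∧
    S ∈ R ∧ U ∈ R}.ncard

/-- `O_+`, `O_-` form the half-spin partition of `G_{n-1}`: two maximal
singular subspaces lie in the same class iff `n - dim (S ∩ U)` is odd. -/
def IsHalfSpinPair (lines : Set (Set P)) (n : ℕ) (Opos Oneg : Set (Set P)) : Prop :=
  Opos.Nonempty ∧ Oneg.Nonempty ∧ Disjoint Opos Oneg ∧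
  Opos ∪ Oneg = Gdim lines ((n : ℤ) - 1) ∧
  ∀ S ∈ Gdim lines ((n : ℤ) - 1), ∀ U ∈ Gdim lines ((n : ℤ) - 1),
    ((S ∈ Opos ↔ U ∈ Opos) ↔ ∃ m : ℤ, HasDim lines (S ∩ U) m ∧ Odd ((n : ℤ) - m))

/-- The base subset of `O_δ` associated with a base. -/
def baseSubsetO (lines : Set (Set P)) (n : ℕ) (Oδ : Set (Set P))
    (p : Fin (2 * n) → P) : Set (Set P) :=
  Oδ ∩ baseSubset lines p ((n : ℤ) - 1)

/-- `R ⊆ 𝓑` is inexact in `O_δ`: some base subset of `O_δ` different from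
`𝓑` contains `R`. -/
def IsInexactO (lines : Set (Set P)) (n : ℕ) (Oδ : Set (Set P))
    (𝓑 R : Set (Set P)) : Prop :=
  R ⊆ 𝓑 ∧ ∃ p' : Fin (2 * n) → P, IsBase lines p' ∧
    R ⊆ baseSubsetO lines n Oδ p' ∧ baseSubsetO lines n Oδ p' ≠ 𝓑

/-- A maximal inexact subset of a base subset `𝓑` of `O_δ`. -/
def IsMaxInexactO (lines : Set (Set P)) (n : ℕ) (Oδ : Set (Set P))
    (𝓑 R : Set (Set P)) : Prop :=
  IsInexactO lines n Oδ 𝓑 R ∧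
    ∀ R', IsInexactO lines n Oδ 𝓑 R' → R ⊆ R' → R = R'

/-- A complement subset of a base subset `𝓑` of `O_δ`. -/
def IsComplementO (lines : Set (Set P)) (n : ℕ) (Oδ : Set (Set P))
    (𝓑 R : Set (Set P)) : Prop :=
  R ⊆ 𝓑 ∧ IsMaxInexactO lines n Oδ 𝓑 (𝓑 \ R)

/-- Lines of the half-spin space `𝔒_δ`: sets of all elements of `O_δ`
containing a fixed `(n-3)`-dimensional singular subspace. -/
def halfSpinLines (lines : Set (Set P)) (n : ℕ) (Oδ : Set (Set P)) :
    Set (Set (Set P)) :=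
  {ℓ | ∃ S ∈ Gdim lines ((n : ℤ) - 3), ℓ = {T | T ∈ Oδ ∧ S ⊆ T}}

end PolarGeo

/-
Let `q` be a base whose base subset contains `𝓑(-i)`. Every `p j` with `j ≠ i` is cut out by
two members of `𝓑(-i)`, so it is a point of `q`. The remaining point `x` of `q` is collinear
with every `p j`, `j ≠ i, σ i`, but not with `p (σ i)`. By type `D`, `x` then lies in
`⟨p i, p '' E⟩` for every maximal pair-free `E` avoiding `i` and `σ i`, and two such spans meet
only in `p i`. So `q` and `p` have the same points, hence the same base subset.

Dimensions of spans of base points are read off flags built by adding one base point at a time,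
using that no flag has more than `n` members.
-/

namespace PolarGeo

variable {P : Type*} {n : ℕ}

section Span

variable {lines : Set (Set P)}

theorem Col.symm {x y : P} (h : Col lines x y) : Col lines y x := by
  rcases h with rfl | ⟨L, hL, hx, hy⟩
  exacts [Or.inl rfl, Or.inr ⟨L, hL, hy, hx⟩]

theorem isSubspace_span (X : Set P) : IsSubspace lines (span lines X) :=
  fun _ ha _ hb hab L hL haL hbL _ hx S hS => hS.1 _ (ha S hS) _ (hb S hS) hab L hL haL hbL hx

theorem subset_span (X : Set P) : X ⊆ span lines X :=
  fun _ hx _ hS => hS.2 hx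

theorem span_le {X S : Set P} (hS : IsSubspace lines S) (h : X ⊆ S) : span lines X ⊆ S :=
  fun _ hx => hx S ⟨hS, h⟩

theorem span_mono {X Y : Set P} (h : X ⊆ Y) : span lines X ⊆ span lines Y :=
  span_le (isSubspace_span Y) (h.trans (subset_span Y))

theorem span_eq_of_subsingleton {X : Set P} (h : X.Subsingleton) : span lines X = X :=
  (span_le (fun _ ha _ hb hab => absurd (h ha hb) hab) subset_rfl).antisymm (subset_span X)

end Span

section Flags

variable {lines : Set (Set P)}

theorem isFlag_empty : IsFlag lines ∅ :=
  ⟨IsChain.empty, fun _ h => absurd h (Set.notMem_empty _)⟩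

theorem isFlag_singleton {S : Set P} (hS : IsSingular lines S) (hSne : S.Nonempty) :
    IsFlag lines {S} :=
  ⟨IsChain.singleton, fun _ h => h ▸ ⟨hS, hSne⟩⟩

theorem IsFlag.insert {C : Set (Set P)} {S : Set P} (hC : IsFlag lines C)
    (hS : IsSingular lines S) (hSne : S.Nonempty) (hCS : ∀ T ∈ C, T ⊆ S) :
    IsFlag lines (insert S C) := by
  refine ⟨hC.1.insert fun T hT _ => Or.inr (hCS T hT), ?_⟩
  rintro T (rfl | hT)
  exacts [⟨hS, hSne⟩, hC.2 T hT]

theorem isFlag_sUnion {c : Set (Set (Set P))} (hc : IsChain (· ⊆ ·) c)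
    (h : ∀ C ∈ c, IsFlag lines C) : IsFlag lines (⋃₀ c) := by
  refine ⟨?_, fun _ ⟨C, hC, hTC⟩ => (h C hC).2 _ hTC⟩
  rintro T ⟨C, hC, hTC⟩ T' ⟨C', hC', hT'C'⟩ hne
  rcases eq_or_ne C C' with rfl | hCC'
  · exact (h C hC).1 hTC hT'C' hne
  · rcases hc hC hC' hCC' with hsub | hsub
    exacts [(h C' hC').1 (hsub hTC) hT'C' hne, (h C hC).1 hTC (hsub hT'C') hne]

theorem IsFlag.exists_maximal {C : Set (Set P)} (hC : IsFlag lines C) :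
    ∃ F, C ⊆ F ∧ IsFlag lines F ∧ ∀ C', IsFlag lines C' → F ⊆ C' → F = C' := by
  obtain ⟨F, hCF, hF⟩ := zorn_subset_nonempty {C | IsFlag lines C}
    (fun c hc hchain _ => ⟨⋃₀ c, isFlag_sUnion hchain hc, fun _ => Set.subset_sUnion_of_mem⟩)
    C hC
  exact ⟨F, hCF, hF.1, fun C' hC' hFC' => hFC'.antisymm (hF.2 hC' hFC')⟩

end Flags

section PolarSpace

variable (Pol : PolarSpace P n)

theorem isSubspace_perp (X : Set P) : IsSubspace Pol.lines (perp Pol.lines X) := by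
  intro a ha b hb hab L hL haL hbL z hz x hx
  rcases Pol.one_or_all x L hL with ⟨_, _, huniq⟩ | hall
  · exact absurd ((huniq a ⟨haL, ha x hx⟩).trans (huniq b ⟨hbL, hb x hx⟩).symm) hab
  · exact hall z hz

theorem col_of_mem_span {X : Set P} {z y : P} (h : ∀ x ∈ X, Col Pol.lines z x)
    (hy : y ∈ span Pol.lines X) : Col Pol.lines z y :=
  span_le (isSubspace_perp Pol {z}) (fun x hx _ hw => hw ▸ h x hx) hy z rfl

theorem isSingular_span {X : Set P} (h : ∀ x ∈ X, ∀ y ∈ X, Col Pol.lines x y) :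
    IsSingular Pol.lines (span Pol.lines X) :=
  ⟨isSubspace_span X, fun _ hu _ hv => col_of_mem_span Pol
    (fun x hx => (col_of_mem_span Pol (h x hx) hu).symm) hv⟩

theorem isSingular_span_insert {X : Set P} {y : P} (hX : ∀ x ∈ X, ∀ x' ∈ X, Col Pol.lines x x')
    (hy : ∀ x ∈ X, Col Pol.lines x y) : IsSingular Pol.lines (span Pol.lines (insert y X)) :=
  isSingular_span Pol <| by
    rintro _ (rfl | hx) _ (rfl | hx')
    exacts [Or.inl rfl, (hy _ hx').symm, hy _ hx, hX _ hx _ hx']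

variable {Pol} (hn : n ≠ 0)
include hn

theorem IsFlag.finite_and_ncard_le {C : Set (Set P)} (hC : IsFlag Pol.lines C) :
    C.Finite ∧ C.ncard ≤ n := by
  obtain ⟨F, hCF, hF, hFmax⟩ := hC.exists_maximal
  have hFcard := Pol.flag_card F hF hFmax
  have hFfin : F.Finite := Set.finite_of_ncard_ne_zero (hFcard ▸ hn)
  exact ⟨hFfin.subset hCF, hFcard ▸ Set.ncard_le_ncard hCF hFfin⟩

theorem ncard_add_ncard_le_of_separated {C₁ C₂ : Set (Set P)} {S : Set P}
    (hC₁ : IsFlag Pol.lines C₁) (hC₂ : IsFlag Pol.lines C₂) (h₁ : ∀ T ∈ C₁, T ⊆ S)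
    (h₂ : ∀ T ∈ C₂, S ⊆ T ∧ ¬ T ⊆ S) : C₁.ncard + C₂.ncard ≤ n := by
  have hflag : IsFlag Pol.lines (C₁ ∪ C₂) := by
    refine ⟨?_, fun T hT => hT.elim (hC₁.2 T) (hC₂.2 T)⟩
    rintro T (hT | hT) T' (hT' | hT') hne
    · exact hC₁.1 hT hT' hne
    · exact Or.inl ((h₁ T hT).trans (h₂ T' hT').1)
    · exact Or.inr ((h₁ T' hT').trans (h₂ T hT).1)
    · exact hC₂.1 hT hT' hne
  have hdisj : Disjoint C₁ C₂ :=
    Set.disjoint_left.2 fun T hT₁ hT₂ => (h₂ T hT₂).2 (h₁ T hT₁)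
  rw [← Set.ncard_union_eq hdisj (hC₁.finite_and_ncard_le hn).1 (hC₂.finite_and_ncard_le hn).1]
  exact (hflag.finite_and_ncard_le hn).2

theorem hasDim_of_isFlagIn {S : Set P} {C : Set (Set P)} {m : ℕ} (hS : IsSingular Pol.lines S)
    (hC : IsFlagIn Pol.lines S C) (hCm : C.ncard = m)
    (hle : ∀ C', IsFlagIn Pol.lines S C' → C'.ncard ≤ m) : HasDim Pol.lines S ((m : ℤ) - 1) := by
  refine ⟨hS, C, hC, fun C' hC' hCC' => ?_, (hC.1.finite_and_ncard_le hn).1, by omega⟩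
  exact Set.eq_of_subset_of_ncard_le hCC' (hCm ▸ hle C' hC') (hC'.1.finite_and_ncard_le hn).1

end PolarSpace

section PairFree

variable {ι : Type*} {σ : ι → ι} {A B J : Finset ι}

def PairFree (σ : ι → ι) (J : Finset ι) : Prop :=
  ∀ a ∈ J, σ a ∉ J

theorem pairFree_empty : PairFree σ ∅ :=
  fun a h => absurd h (Finset.notMem_empty a)

theorem PairFree.mono (hJ : PairFree σ J) (h : A ⊆ J) : PairFree σ A :=
  fun a ha hσa => hJ a (h ha) (h hσa)

variable [DecidableEq ι]

theorem PairFree.disjoint_image (hJ : PairFree σ J) : Disjoint J (J.image σ) :=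
  Finset.disjoint_left.2 fun a ha hmem => by
    obtain ⟨b, hb, rfl⟩ := Finset.mem_image.1 hmem
    exact hJ b hb ha

theorem insert_inter_insert_image (hA : PairFree σ A) (a : ι) :
    insert a A ∩ insert a (A.image σ) = {a} := by
  rw [← Finset.insert_inter_distrib,
    Finset.disjoint_iff_inter_eq_empty.1 hA.disjoint_image, Finset.insert_empty]

variable (hσ : Function.Involutive σ)
include hσ

theorem mem_image_iff_of_involutive {a : ι} : a ∈ J.image σ ↔ σ a ∈ J := by
  refine ⟨fun h => ?_, fun h => Finset.mem_image.2 ⟨σ a, h, hσ a⟩⟩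
  obtain ⟨b, hb, rfl⟩ := Finset.mem_image.1 h
  rwa [hσ b]

theorem PairFree.image (hJ : PairFree σ J) : PairFree σ (J.image σ) := by
  intro a ha hσa
  rw [mem_image_iff_of_involutive hσ] at ha hσa
  exact hJ _ hσa (by rwa [hσ])

theorem PairFree.insert (hJ : PairFree σ J) {a : ι} (hfix : σ a ≠ a) (ha : σ a ∉ J) :
    PairFree σ (insert a J) := by
  intro b hb hσb
  rcases Finset.mem_insert.1 hb with rfl | hb <;> rcases Finset.mem_insert.1 hσb with h | h
  · exact hfix h
  · exact ha h
  · exact ha (h ▸ (hσ b).symm ▸ hb)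
  · exact hJ b hb h

variable [Fintype ι]

theorem PairFree.two_mul_card_le (hJ : PairFree σ J) : 2 * J.card ≤ Fintype.card ι := by
  have hle := Finset.card_le_univ (J ∪ J.image σ)
  rw [Finset.card_union_of_disjoint hJ.disjoint_image,
    Finset.card_image_of_injective _ hσ.injective] at hle
  omega

theorem exists_fresh (h : 2 * A.card + B.card < Fintype.card ι) :
    ∃ m, m ∉ A ∧ σ m ∉ A ∧ m ∉ B := by
  have hcard : (A ∪ A.image σ ∪ B).card < (Finset.univ : Finset ι).card := by
    have h₁ := Finset.card_union_le (A ∪ A.image σ) B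
    have h₂ := Finset.card_union_le A (A.image σ)
    have h₃ := Finset.card_image_le (s := A) (f := σ)
    rw [Finset.card_univ]
    omega
  obtain ⟨m, -, hm⟩ := Finset.exists_mem_notMem_of_card_lt_card hcard
  simp only [Finset.mem_union, Finset.mem_image, not_or] at hm
  exact ⟨m, hm.1.1, fun h => hm.1.2 ⟨σ m, h, hσ m⟩, hm.2⟩

theorem PairFree.exists_superset (hfix : ∀ a, σ a ≠ a) (hA : PairFree σ A)
    (hAB : Disjoint A B) {s : ℕ} (hAs : A.card ≤ s) (hs : 2 * s + B.card ≤ Fintype.card ι + 1) :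
    ∃ A', A ⊆ A' ∧ A'.card = s ∧ PairFree σ A' ∧ Disjoint A' B := by
  obtain ⟨d, hd⟩ : ∃ d, A.card + d = s := ⟨s - A.card, by omega⟩
  clear hAs
  induction d generalizing A with
  | zero => exact ⟨A, subset_rfl, by omega, hA, hAB⟩
  | succ d ih =>
    obtain ⟨m, hmA, hσmA, hmB⟩ := exists_fresh hσ (A := A) (B := B) (by omega)
    obtain ⟨A', hsub, hcard, hA', hA'B⟩ := ih (hA.insert hσ (hfix m) hσmA)
      (Finset.disjoint_insert_left.2 ⟨hmB, hAB⟩)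
      (by rw [Finset.card_insert_of_notMem hmA]; omega)
    exact ⟨A', (Finset.subset_insert m A).trans hsub, hcard, hA', hA'B⟩

end PairFree

section Opposition

variable {ι : Type*} {lines : Set (Set P)} {p : ι → P} {σ : ι → ι}

/-- `σ` is the map `i ↦ σ(i)` of the paper: `p (σ a)` is the only base point not collinear
with `p a`. -/
def IsOpposition (lines : Set (Set P)) (p : ι → P) (σ : ι → ι) : Prop :=
  ∀ a b, ¬ Col lines (p a) (p b) ↔ b = σ a

theorem IsBase.exists_opposition {q : Fin (2 * n) → P} (hq : IsBase lines q) :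
    ∃ τ, IsOpposition lines q τ := by
  choose τ hτ huniq using hq.2
  exact ⟨τ, fun a b => ⟨huniq a b, fun h => h ▸ hτ a⟩⟩

theorem IsOpposition.col_iff (hσ : IsOpposition lines p σ) {a b : ι} :
    Col lines (p a) (p b) ↔ b ≠ σ a := by
  rw [ne_eq, ← hσ a b, not_not]

theorem IsOpposition.apply_ne (hσ : IsOpposition lines p σ) (a : ι) : σ a ≠ a :=
  fun h => (hσ a a).2 h.symm (Or.inl rfl)

theorem IsOpposition.involutive (hσ : IsOpposition lines p σ) : Function.Involutive σ :=
  fun a => ((hσ (σ a) a).1 fun h => (hσ a (σ a)).2 rfl h.symm).symm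

theorem IsOpposition.col_of_pairFree (hσ : IsOpposition lines p σ) {J : Finset ι}
    (hJ : PairFree σ J) : ∀ x ∈ p '' J, ∀ y ∈ p '' J, Col lines x y := by
  rintro _ ⟨a, ha, rfl⟩ _ ⟨b, hb, rfl⟩
  exact hσ.col_iff.2 fun h => hJ a ha (h ▸ hb)

def baseSpan (lines : Set (Set P)) (p : ι → P) (J : Finset ι) : Set P :=
  span lines (p '' J)

theorem mem_baseSpan {J : Finset ι} {a : ι} (ha : a ∈ J) : p a ∈ baseSpan lines p J :=
  subset_span _ ⟨a, ha, rfl⟩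

theorem baseSpan_mono {J J' : Finset ι} (h : J ⊆ J') :
    baseSpan lines p J ⊆ baseSpan lines p J' :=
  span_mono (Set.image_mono (Finset.coe_subset.2 h))

theorem baseSpan_empty : baseSpan lines p ∅ = ∅ := by
  rw [baseSpan, Finset.coe_empty, Set.image_empty,
    span_eq_of_subsingleton Set.subsingleton_empty]

theorem baseSpan_singleton (a : ι) : baseSpan lines p {a} = {p a} := by
  rw [baseSpan, Finset.coe_singleton, Set.image_singleton,
    span_eq_of_subsingleton Set.subsingleton_singleton]

variable (Pol : PolarSpace P n) (hσ : IsOpposition Pol.lines p σ)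
include hσ

theorem col_of_mem_baseSpan {J : Finset ι} {t : ι} (ht : σ t ∉ J) {y : P}
    (hy : y ∈ baseSpan Pol.lines p J) : Col Pol.lines (p t) y :=
  col_of_mem_span Pol (by rintro _ ⟨b, hb, rfl⟩; exact hσ.col_iff.2 fun h => ht (h ▸ hb)) hy

theorem notMem_baseSpan {J : Finset ι} {t : ι} (ht : t ∉ J) : p t ∉ baseSpan Pol.lines p J :=
  fun h => hσ.col_iff.1 (col_of_mem_baseSpan Pol hσ (by rwa [hσ.involutive t]) h)
    (hσ.involutive t).symm

theorem isSingular_baseSpan {J : Finset ι} (hJ : PairFree σ J) :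
    IsSingular Pol.lines (baseSpan Pol.lines p J) :=
  isSingular_span Pol (hσ.col_of_pairFree hJ)

variable [DecidableEq ι] {Pol} (hn : n ≠ 0)
include hn

theorem exists_flag_between {J K : Finset ι} (hK : PairFree σ K) (hJK : J ⊆ K) :
    ∃ C, IsFlag Pol.lines C ∧ C.ncard = K.card - J.card ∧
      ∀ T ∈ C, baseSpan Pol.lines p J ⊆ T ∧ ¬ T ⊆ baseSpan Pol.lines p J ∧
        T ⊆ baseSpan Pol.lines p K := by
  induction K using Finset.strongInduction with
  | H K ih =>
    by_cases hKJ : K ⊆ J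
    · refine ⟨∅, isFlag_empty, ?_, fun _ h => absurd h (Set.notMem_empty _)⟩
      rw [Set.ncard_empty, Finset.card_le_card hKJ |>.antisymm (Finset.card_le_card hJK)]
      omega
    obtain ⟨a, haK, haJ⟩ := Finset.not_subset.1 hKJ
    have hJa : J ⊆ K.erase a := fun b hb => Finset.mem_erase.2 ⟨fun h => haJ (h ▸ hb), hJK hb⟩
    obtain ⟨C, hC, hCcard, hCT⟩ :=
      ih _ (Finset.erase_ssubset haK) (hK.mono (Finset.erase_subset a K)) hJa
    have hsub : baseSpan Pol.lines p (K.erase a) ⊆ baseSpan Pol.lines p K :=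
      baseSpan_mono (Finset.erase_subset a K)
    have hKC : baseSpan Pol.lines p K ∉ C := fun h =>
      notMem_baseSpan Pol hσ (Finset.notMem_erase a K) ((hCT _ h).2.2 (mem_baseSpan haK))
    refine ⟨insert (baseSpan Pol.lines p K) C,
      hC.insert (isSingular_baseSpan Pol hσ hK) ⟨p a, mem_baseSpan haK⟩
        (fun T hT => (hCT T hT).2.2.trans hsub), ?_, ?_⟩
    · have hle := Finset.card_le_card hJa
      have hpos := Finset.card_pos.2 ⟨a, haK⟩
      rw [Finset.card_erase_of_mem haK] at hle
      rw [Set.ncard_insert_of_notMem hKC (hC.finite_and_ncard_le hn).1, hCcard,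
        Finset.card_erase_of_mem haK]
      omega
    · rintro T (rfl | hT)
      · exact ⟨baseSpan_mono hJK, fun h => notMem_baseSpan Pol hσ haJ (h (mem_baseSpan haK)),
          subset_rfl⟩
      · exact ⟨(hCT T hT).1, (hCT T hT).2.1, (hCT T hT).2.2.trans hsub⟩

end Opposition

section Rank

variable {Pol : PolarSpace P n} {p : Fin (2 * n) → P} {σ : Fin (2 * n) → Fin (2 * n)}
  {J K : Finset (Fin (2 * n))} (hσ : IsOpposition Pol.lines p σ)
include hσ

theorem PairFree.exists_frame (hJ : PairFree σ J) :
    ∃ K, J ⊆ K ∧ K.card = n ∧ PairFree σ K := by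
  have hJn := hJ.two_mul_card_le hσ.involutive
  rw [Fintype.card_fin] at hJn
  obtain ⟨K, hJK, hKcard, hK, -⟩ := hJ.exists_superset hσ.involutive hσ.apply_ne
    (Finset.disjoint_empty_right J) (s := n) (by omega) (by simp)
  exact ⟨K, hJK, hKcard, hK⟩

variable (hn : n ≠ 0)
include hn

theorem ncard_le_of_subset_baseSpan (hJ : PairFree σ J) {C : Set (Set P)}
    (hC : IsFlag Pol.lines C) (hCJ : ∀ T ∈ C, T ⊆ baseSpan Pol.lines p J) :
    C.ncard ≤ J.card := by
  obtain ⟨K, hJK, hKcard, hK⟩ := hJ.exists_frame hσ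
  obtain ⟨C', hC', hC'card, hC'T⟩ := exists_flag_between hσ hn hK hJK
  have hsum := ncard_add_ncard_le_of_separated hn hC hC' hCJ
    fun T hT => ⟨(hC'T T hT).1, (hC'T T hT).2.1⟩
  have hJK' := Finset.card_le_card hJK
  omega

theorem hasDim_baseSpan (hJ : PairFree σ J) :
    HasDim Pol.lines (baseSpan Pol.lines p J) ((J.card : ℤ) - 1) := by
  obtain ⟨C, hC, hCcard, hCT⟩ := exists_flag_between hσ hn hJ (Finset.empty_subset J)
  exact hasDim_of_isFlagIn hn (isSingular_baseSpan Pol hσ hJ) ⟨hC, fun T hT => (hCT T hT).2.2⟩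
    (by simpa using hCcard) fun C' hC' => ncard_le_of_subset_baseSpan hσ hn hJ hC'.1 hC'.2

theorem eq_baseSpan_of_card_eq (hK : PairFree σ K) (hKcard : K.card = n) {T : Set P}
    (hT : IsSingular Pol.lines T) (hKT : baseSpan Pol.lines p K ⊆ T) :
    T = baseSpan Pol.lines p K := by
  by_contra hne
  have hTK : ¬ T ⊆ baseSpan Pol.lines p K := fun h => hne (h.antisymm hKT)
  obtain ⟨C, hC, hCcard, hCT⟩ := exists_flag_between hσ hn hK (Finset.empty_subset K)
  have hsum := ncard_add_ncard_le_of_separated hn hC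
    (isFlag_singleton hT (Set.nonempty_of_not_subset hTK).of_sdiff) (fun U hU => (hCT U hU).2.2)
    (by rintro _ rfl; exact ⟨hKT, hTK⟩)
  rw [Set.ncard_singleton, hCcard, Finset.card_empty] at hsum
  omega

theorem mem_baseSpan_of_card_eq (hK : PairFree σ K) (hKcard : K.card = n) {y : P}
    (hy : ∀ a ∈ K, Col Pol.lines (p a) y) : y ∈ baseSpan Pol.lines p K := by
  have hT := isSingular_span_insert Pol (hσ.col_of_pairFree hK)
    (by rintro _ ⟨a, ha, rfl⟩; exact hy a ha)
  rw [← eq_baseSpan_of_card_eq hσ hn hK hKcard hT (span_mono (Set.subset_insert _ _))]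
  exact subset_span _ (Set.mem_insert y _)

theorem eq_baseSpan_insert {m : Fin (2 * n)} (hJm : PairFree σ (insert m J)) (hm : m ∉ J)
    {U : Set P} (hU : IsSingular Pol.lines U) (hJU : baseSpan Pol.lines p J ⊆ U)
    (hUJ : ¬ U ⊆ baseSpan Pol.lines p J) (hUm : U ⊆ baseSpan Pol.lines p (insert m J)) :
    U = baseSpan Pol.lines p (insert m J) := by
  by_contra hne
  obtain ⟨C, hC, hCcard, hCT⟩ :=
    exists_flag_between hσ hn (hJm.mono (Finset.subset_insert m J)) (Finset.empty_subset J)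
  have hCU : ∀ T ∈ C, T ⊆ U := fun T hT => (hCT T hT).2.2.trans hJU
  have hUC : U ∉ C := fun h => hUJ (hCT U h).2.2
  have hpm := mem_baseSpan (lines := Pol.lines) (p := p) (Finset.mem_insert_self m J)
  have hVUC : baseSpan Pol.lines p (insert m J) ∉ insert U C := by
    rintro (h | h)
    · exact hne h.symm
    · exact notMem_baseSpan Pol hσ hm ((hCT _ h).2.2 hpm)
  have hflag := (hC.insert hU (Set.nonempty_of_not_subset hUJ).of_sdiff hCU).insert
    (isSingular_baseSpan Pol hσ hJm) ⟨_, hpm⟩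
    (by rintro T (rfl | hT); exacts [hUm, (hCU T hT).trans hUm])
  have hle := ncard_le_of_subset_baseSpan hσ hn hJm hflag
    (by rintro T (rfl | rfl | hT); exacts [subset_rfl, hUm, (hCU T hT).trans hUm])
  rw [Set.ncard_insert_of_notMem hVUC ((hC.finite_and_ncard_le hn).1.insert U),
    Set.ncard_insert_of_notMem hUC (hC.finite_and_ncard_le hn).1, hCcard, Finset.card_empty,
    Finset.card_insert_of_notMem hm] at hle
  omega

theorem inter_baseSpan_insert_subset (hJ : PairFree σ J) {m : Fin (2 * n)} (hm : m ∉ J)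
    (hσm : σ m ∉ J) :
    baseSpan Pol.lines p (insert m J) ∩ baseSpan Pol.lines p (insert (σ m) J) ⊆
      baseSpan Pol.lines p J := by
  rintro x ⟨h₁, h₂⟩
  by_contra hx
  have hspan : ∀ m', m' ∉ J → σ m' ∉ J → x ∈ baseSpan Pol.lines p (insert m' J) →
      span Pol.lines (insert x (p '' J)) = baseSpan Pol.lines p (insert m' J) := by
    intro m' hm' hσm' hxm'
    have hJm' := hJ.insert hσ.involutive (hσ.apply_ne m') hσm'
    have hS := isSingular_baseSpan Pol hσ hJm'
    have hgen : insert x (p '' J) ⊆ baseSpan Pol.lines p (insert m' J) :=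
      Set.insert_subset hxm' ((subset_span _).trans (baseSpan_mono (Finset.subset_insert m' J)))
    exact eq_baseSpan_insert hσ hn hJm' hm'
      (isSingular_span Pol fun a ha b hb => hS.2 a (hgen ha) b (hgen hb))
      (span_mono (Set.subset_insert x _)) (fun h => hx (h (subset_span _ (Set.mem_insert x _))))
      (span_le hS.1 hgen)
  have heq := (hspan m hm hσm h₁).symm.trans
    (hspan (σ m) hσm (by rwa [hσ.involutive m]) h₂)
  have hmσ : m ∉ insert (σ m) J := fun h =>
    (Finset.mem_insert.1 h).elim (hσ.apply_ne m).symm hm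
  exact notMem_baseSpan Pol hσ hmσ (heq ▸ mem_baseSpan (Finset.mem_insert_self m J))

/-- For frames this is maximality of `⟨p '' E⟩`; descend from a frame to `J` one index at a
time with `inter_baseSpan_insert_subset`. -/
theorem mem_baseSpan_of_forall_col (hJ : PairFree σ J) {y : P}
    (hy : ∀ t, σ t ∉ J → Col Pol.lines (p t) y) : y ∈ baseSpan Pol.lines p J := by
  have hinv := hσ.involutive
  suffices key : ∀ d E, PairFree σ E → J ⊆ E → E.card + d = n → y ∈ baseSpan Pol.lines p E by
    have hJn := hJ.two_mul_card_le hinv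
    rw [Fintype.card_fin] at hJn
    exact key (n - J.card) J hJ subset_rfl (by omega)
  intro d
  induction d with
  | zero =>
    intro E hE hJE hEcard
    exact mem_baseSpan_of_card_eq hσ hn hE hEcard fun a ha => hy a fun h => hE a ha (hJE h)
  | succ d ih =>
    intro E hE hJE hEcard
    obtain ⟨m, hmE, hσmE, -⟩ := exists_fresh hinv (A := E) (B := ∅) (by simp; omega)
    have hσσm : σ (σ m) ∉ E := by rwa [hinv m]
    exact inter_baseSpan_insert_subset hσ hn hE hmE hσmE
      ⟨ih _ (hE.insert hinv (hσ.apply_ne m) hσmE) (hJE.trans (Finset.subset_insert _ _))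
          (by rw [Finset.card_insert_of_notMem hmE]; omega),
        ih _ (hE.insert hinv (hσ.apply_ne (σ m)) hσσm) (hJE.trans (Finset.subset_insert _ _))
          (by rw [Finset.card_insert_of_notMem hσmE]; omega)⟩

theorem baseSpan_inter (hJ : PairFree σ J) (K : Finset (Fin (2 * n))) :
    baseSpan Pol.lines p J ∩ baseSpan Pol.lines p K = baseSpan Pol.lines p (J ∩ K) := by
  refine subset_antisymm (fun x ⟨hxJ, hxK⟩ => mem_baseSpan_of_forall_col hσ hn
      (hJ.mono Finset.inter_subset_left) fun t ht => ?_)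
    (Set.subset_inter (baseSpan_mono Finset.inter_subset_left)
      (baseSpan_mono Finset.inter_subset_right))
  by_cases htJ : σ t ∈ J
  · exact col_of_mem_baseSpan Pol hσ (fun h => ht (Finset.mem_inter.2 ⟨htJ, h⟩)) hxK
  · exact col_of_mem_baseSpan Pol hσ htJ hxJ

theorem baseSpan_insert_inter_insert_image (hJ : PairFree σ J) {a : Fin (2 * n)} (ha : a ∉ J)
    (hσa : σ a ∉ J) :
    baseSpan Pol.lines p (insert a J) ∩ baseSpan Pol.lines p (insert a (J.image σ)) = {p a} := by
  have hinv := hσ.involutive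
  have hσa' : σ a ∉ J.image σ := by rwa [mem_image_iff_of_involutive hinv, hinv a]
  rw [baseSpan_inter hσ hn (hJ.insert hinv (hσ.apply_ne a) hσa), insert_inter_insert_image hJ a,
    baseSpan_singleton]

end Rank

section BaseSubset

variable {lines : Set (Set P)} {p q : Fin (2 * n) → P}

theorem baseSubset_subset_of_range_subset (h : Set.range p ⊆ Set.range q) (k : ℤ) :
    baseSubset lines p k ⊆ baseSubset lines q k := by
  rintro S ⟨hS, I, rfl⟩
  exact ⟨hS, q ⁻¹' (p '' I),
    by rw [Set.image_preimage_eq_of_subset ((Set.image_subset_range p I).trans h)]⟩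

theorem exists_pairFree_of_mem_baseSubset {τ : Fin (2 * n) → Fin (2 * n)}
    (hτ : IsOpposition lines q τ) {k : ℤ} {S : Set P} (hS : S ∈ baseSubset lines q k) :
    ∃ A, PairFree τ A ∧ S = baseSpan lines q A := by
  obtain ⟨⟨hsing, -⟩, I, rfl⟩ := hS
  refine ⟨(Set.toFinite I).toFinset, fun a ha hτa => ?_,
    by rw [baseSpan, Set.Finite.coe_toFinset]⟩
  rw [Set.Finite.mem_toFinset] at ha hτa
  exact (hτ a (τ a)).2 rfl
    (hsing.2 _ (subset_span _ ⟨a, ha, rfl⟩) _ (subset_span _ ⟨τ a, hτa, rfl⟩))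

theorem IsBase.col_of_ne (hq : IsBase lines q) {y z w : P} (hy : y ∈ Set.range q)
    (hz : z ∈ Set.range q) (hw : w ∈ Set.range q) (hyz : ¬ Col lines y z) (hwz : w ≠ z) :
    Col lines y w := by
  obtain ⟨a, rfl⟩ := hy
  obtain ⟨b, rfl⟩ := hz
  obtain ⟨c, rfl⟩ := hw
  by_contra hyw
  obtain ⟨d, -, huniq⟩ := hq.2 a
  exact hwz (congrArg q ((huniq c hyw).trans (huniq b hyz).symm))

theorem exists_range_sdiff_eq_singleton (hp : Function.Injective p) (hq : Function.Injective q)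
    (hn : n ≠ 0) {i : Fin (2 * n)} (hcover : p '' {i}ᶜ ⊆ Set.range q) :
    ∃ x, Set.range q \ p '' {i}ᶜ = {x} := by
  rw [← Set.ncard_eq_one, Set.ncard_sdiff hcover, Set.ncard_range_of_injective hq,
    Set.ncard_image_of_injective _ hp, Set.ncard_compl, Set.ncard_singleton]
  simp only [Nat.card_eq_fintype_card, Fintype.card_fin]
  omega

variable {Pol : PolarSpace P n} {σ τ : Fin (2 * n) → Fin (2 * n)} {J : Finset (Fin (2 * n))}

theorem baseSpan_mem_baseSubset (hσ : IsOpposition Pol.lines p σ) (hn : n ≠ 0)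
    (hJ : PairFree σ J) {k : ℕ} (hk : J.card = k + 1) :
    baseSpan Pol.lines p J ∈ baseSubset Pol.lines p k :=
  ⟨by simpa [hk] using hasDim_baseSpan hσ hn hJ, J, rfl⟩

theorem mem_range_of_inter_eq_singleton (hτ : IsOpposition Pol.lines q τ) (hn : n ≠ 0)
    {k : ℤ} {S₁ S₂ : Set P} (hS₁ : S₁ ∈ baseSubset Pol.lines q k)
    (hS₂ : S₂ ∈ baseSubset Pol.lines q k) {y : P} (h : S₁ ∩ S₂ = {y}) : y ∈ Set.range q := by
  obtain ⟨A₁, hA₁, rfl⟩ := exists_pairFree_of_mem_baseSubset hτ hS₁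
  obtain ⟨A₂, -, rfl⟩ := exists_pairFree_of_mem_baseSubset hτ hS₂
  rw [baseSpan_inter hτ hn hA₁] at h
  obtain ⟨a, ha⟩ := (A₁ ∩ A₂).eq_empty_or_nonempty.resolve_left fun hA => by
    rw [hA, baseSpan_empty] at h
    exact Set.singleton_ne_empty y h.symm
  exact ⟨a, Set.mem_singleton_iff.1 (h ▸ mem_baseSpan ha)⟩

end BaseSubset

section TypeD

variable {Pol : PolarSpace P n} {p : Fin (2 * n) → P} {σ : Fin (2 * n) → Fin (2 * n)}
  {E : Finset (Fin (2 * n))} {i : Fin (2 * n)} {x : P}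

theorem eq_or_eq_of_typeD (hD : TypeD Pol.lines n) {W M₁ M₂ M : Set P}
    (hW : W ∈ Gdim Pol.lines ((n : ℤ) - 2)) (h₁₂ : M₁ ≠ M₂)
    (hM₁ : M₁ ∈ Gdim Pol.lines ((n : ℤ) - 1)) (hM₂ : M₂ ∈ Gdim Pol.lines ((n : ℤ) - 1))
    (hM : M ∈ Gdim Pol.lines ((n : ℤ) - 1)) (hWM₁ : W ⊆ M₁) (hWM₂ : W ⊆ M₂) (hWM : W ⊆ M) :
    M = M₁ ∨ M = M₂ := by
  have hcard := hD W hW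
  have hpair : ({M₁, M₂} : Set (Set P)) = {M | M ∈ Gdim Pol.lines ((n : ℤ) - 1) ∧ W ⊆ M} :=
    Set.eq_of_subset_of_ncard_le (by rintro _ (rfl | rfl); exacts [⟨hM₁, hWM₁⟩, ⟨hM₂, hWM₂⟩])
      (by rw [hcard, Set.ncard_pair h₁₂]) (Set.finite_of_ncard_ne_zero (by omega))
  exact (hpair ▸ ⟨hM, hWM⟩ : M ∈ ({M₁, M₂} : Set (Set P)))

variable (hσ : IsOpposition Pol.lines p σ) (hn : n ≠ 0)
include hσ hn

theorem hasDim_span_insert (hE : PairFree σ E) (hEcard : E.card + 1 = n)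
    (hxE : ∀ e ∈ E, Col Pol.lines (p e) x) (hxW : x ∉ baseSpan Pol.lines p E) :
    HasDim Pol.lines (span Pol.lines (insert x (p '' E))) ((n : ℤ) - 1) := by
  have hM := isSingular_span_insert Pol (hσ.col_of_pairFree hE)
    (by rintro _ ⟨e, he, rfl⟩; exact hxE e he)
  have hWM : baseSpan Pol.lines p E ⊆ span Pol.lines (insert x (p '' E)) :=
    span_mono (Set.subset_insert x _)
  have hxM : x ∈ span Pol.lines (insert x (p '' E)) := subset_span _ (Set.mem_insert x _)
  obtain ⟨C, hC, hCcard, hCT⟩ := exists_flag_between hσ hn hE (Finset.empty_subset E)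
  have hMC : span Pol.lines (insert x (p '' E)) ∉ C := fun h => hxW ((hCT _ h).2.2 hxM)
  refine hasDim_of_isFlagIn hn hM
    ⟨hC.insert hM ⟨x, hxM⟩ fun T hT => (hCT T hT).2.2.trans hWM, ?_⟩ ?_
    fun C' hC' => (hC'.1.finite_and_ncard_le hn).2
  · rintro T (rfl | hT)
    exacts [subset_rfl, (hCT T hT).2.2.trans hWM]
  · rw [Set.ncard_insert_of_notMem hMC (hC.finite_and_ncard_le hn).1, hCcard, Finset.card_empty]
    omega

/-- By type `D` the maximal singular subspace `⟨x, p '' E⟩` is `⟨p '' (insert i E)⟩` or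
`⟨p '' (insert (σ i) E)⟩`, and `hx` excludes the latter. -/
theorem mem_baseSpan_insert_of_typeD (hD : TypeD Pol.lines n) (hE : PairFree σ E)
    (hEcard : E.card + 1 = n) (hiE : i ∉ E) (hσiE : σ i ∉ E)
    (hxE : ∀ e ∈ E, Col Pol.lines (p e) x) (hx : ¬ Col Pol.lines (p (σ i)) x) :
    x ∈ baseSpan Pol.lines p (insert i E) := by
  have hinv := hσ.involutive
  have hiσ : i ∉ insert (σ i) E := fun h =>
    (Finset.mem_insert.1 h).elim (hσ.apply_ne i).symm hiE
  have hxW : x ∉ baseSpan Pol.lines p E := fun h =>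
    hx (col_of_mem_baseSpan Pol hσ (by rwa [hinv i]) h)
  have hdim : ∀ a, a ∉ E → σ a ∉ E →
      baseSpan Pol.lines p (insert a E) ∈ Gdim Pol.lines ((n : ℤ) - 1) := by
    intro a haE hσaE
    have hdimE := hasDim_baseSpan hσ hn (hE.insert hinv (hσ.apply_ne a) hσaE)
    rwa [Finset.card_insert_of_notMem haE, show ((E.card + 1 : ℕ) : ℤ) - 1 = n - 1 by omega]
      at hdimE
  have hW : baseSpan Pol.lines p E ∈ Gdim Pol.lines ((n : ℤ) - 2) := by
    have hdimE := hasDim_baseSpan hσ hn hE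
    rwa [show (E.card : ℤ) - 1 = n - 2 by omega] at hdimE
  have hne : baseSpan Pol.lines p (insert i E) ≠ baseSpan Pol.lines p (insert (σ i) E) :=
    fun h => notMem_baseSpan Pol hσ hiσ (h ▸ mem_baseSpan (Finset.mem_insert_self i E))
  have hxM : x ∈ span Pol.lines (insert x (p '' E)) := subset_span _ (Set.mem_insert x _)
  rcases eq_or_eq_of_typeD hD hW hne (hdim i hiE hσiE) (hdim (σ i) hσiE (by rwa [hinv i]))
      (hasDim_span_insert hσ hn hE hEcard hxE hxW) (baseSpan_mono (Finset.subset_insert _ _))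
      (baseSpan_mono (Finset.subset_insert _ _)) (span_mono (Set.subset_insert x _)) with h | h
  · exact h ▸ hxM
  · exact absurd (col_of_mem_baseSpan Pol hσ (by rwa [hinv i]) (h ▸ hxM)) hx

theorem eq_of_forall_col_of_typeD (hD : TypeD Pol.lines n)
    (hx₁ : ∀ j, j ≠ i → j ≠ σ i → Col Pol.lines (p j) x) (hx₂ : ¬ Col Pol.lines (p (σ i)) x) :
    x = p i := by
  have hinv := hσ.involutive
  have key : ∀ E, PairFree σ E → E.card + 1 = n → i ∉ E → σ i ∉ E →
      x ∈ baseSpan Pol.lines p (insert i E) := fun E hE hEcard hiE hσiE =>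
    mem_baseSpan_insert_of_typeD hσ hn hD hE hEcard hiE hσiE
      (fun e he => hx₁ e (fun h => hiE (h ▸ he)) (fun h => hσiE (h ▸ he))) hx₂
  obtain ⟨A, -, hAcard, hA, hAi⟩ := pairFree_empty.exists_superset hinv hσ.apply_ne
    (Finset.disjoint_empty_left {i, σ i}) (s := n - 1) (Nat.zero_le _)
    (by have := Finset.card_le_two (a := i) (b := σ i); rw [Fintype.card_fin]; omega)
  have hiA : i ∉ A := fun h => Finset.disjoint_left.1 hAi h (by simp)
  have hσiA : σ i ∉ A := fun h => Finset.disjoint_left.1 hAi h (by simp)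
  have hx : x ∈ baseSpan Pol.lines p (insert i A) ∩ baseSpan Pol.lines p (insert i (A.image σ)) :=
    ⟨key A hA (by omega) hiA hσiA,
      key _ (hA.image hinv) (by rw [Finset.card_image_of_injective _ hinv.injective]; omega)
        (by rwa [mem_image_iff_of_involutive hinv])
        (by rwa [mem_image_iff_of_involutive hinv, hinv])⟩
  rwa [baseSpan_insert_inter_insert_image hσ hn hA hiA hσiA] at hx

end TypeD

section Exactness

variable {Pol : PolarSpace P n} {p q : Fin (2 * n) → P}
  {σ τ : Fin (2 * n) → Fin (2 * n)} {i : Fin (2 * n)}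

/-- `p j` is cut out by `⟨p '' (insert j A)⟩` and `⟨p '' (insert j (σ '' A))⟩` for a pair-free
`A` of size `k` avoiding `i`, `σ i`, `j` and `σ j`. -/
theorem mem_range_of_minus_subset (hσ : IsOpposition Pol.lines p σ) (hn : n ≠ 0) {k : ℕ}
    (hk : k + 2 ≤ n) (hτ : IsOpposition Pol.lines q τ)
    (hsub : minus (baseSubset Pol.lines p k) (p i) ⊆ baseSubset Pol.lines q k)
    {j : Fin (2 * n)} (hj : j ≠ i) : p j ∈ Set.range q := by
  have hinv := hσ.involutive
  obtain ⟨A, -, hAcard, hA, hAB⟩ := pairFree_empty.exists_superset hinv hσ.apply_ne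
    (Finset.disjoint_empty_left {i, σ i, j, σ j}) (s := k) (Nat.zero_le _)
    (by have := Finset.card_le_four (a := i) (b := σ i) (c := j) (d := σ j)
        rw [Fintype.card_fin]; omega)
  have hnotMem : ∀ b ∈ ({i, σ i, j, σ j} : Finset _), b ∉ A := fun b hb hbA =>
    Finset.disjoint_left.1 hAB hbA hb
  have hjA := hnotMem j (by simp)
  have hσjA := hnotMem (σ j) (by simp)
  have hσjA' : σ j ∉ A.image σ := by rwa [mem_image_iff_of_involutive hinv, hinv]
  have hjA' : j ∉ A.image σ := by rwa [mem_image_iff_of_involutive hinv]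
  have hmem : ∀ J, PairFree σ J → J.card = k + 1 → i ∉ J →
      baseSpan Pol.lines p J ∈ minus (baseSubset Pol.lines p k) (p i) :=
    fun J hJ hJcard hiJ => ⟨baseSpan_mem_baseSubset hσ hn hJ hJcard, notMem_baseSpan Pol hσ hiJ⟩
  refine mem_range_of_inter_eq_singleton hτ hn
    (hsub (hmem _ (hA.insert hinv (hσ.apply_ne j) hσjA)
      (by rw [Finset.card_insert_of_notMem hjA, hAcard]) ?_))
    (hsub (hmem _ ((hA.image hinv).insert hinv (hσ.apply_ne j) hσjA')
      (by rw [Finset.card_insert_of_notMem hjA',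
        Finset.card_image_of_injective _ hinv.injective, hAcard]) ?_))
    (baseSpan_insert_inter_insert_image hσ hn hA hjA hσjA)
  · simpa [Ne.symm hj] using hnotMem i (by simp)
  · simpa [Ne.symm hj, mem_image_iff_of_involutive hinv] using hnotMem (σ i) (by simp)

/-- `x` is the opposite of `p (σ i)` in `q`, and of no other `p j`. -/
theorem eq_of_range_sdiff_eq_singleton (hD : TypeD Pol.lines n) (hσ : IsOpposition Pol.lines p σ)
    (hn : n ≠ 0) (hq : IsBase Pol.lines q) (hcover : p '' {i}ᶜ ⊆ Set.range q) {x : P}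
    (hx : Set.range q \ p '' {i}ᶜ = {x}) : x = p i := by
  have hinv := hσ.involutive
  have hxq : x ∈ Set.range q := (hx ▸ Set.mem_singleton x : x ∈ Set.range q \ _).1
  have hxp : x ∉ p '' {i}ᶜ := (hx ▸ Set.mem_singleton x : x ∈ Set.range q \ _).2
  refine eq_of_forall_col_of_typeD hσ hn hD (fun j hj hjσ => ?_) ?_
  · have hσj : σ j ≠ i := fun h => hjσ (by rw [← h, hinv])
    exact hq.col_of_ne (hcover ⟨j, hj, rfl⟩) (hcover ⟨σ j, hσj, rfl⟩) hxq ((hσ j (σ j)).2 rfl)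
      fun h => hxp ⟨σ j, hσj, h.symm⟩
  · obtain ⟨a, ha⟩ := hcover ⟨σ i, hσ.apply_ne i, rfl⟩
    obtain ⟨d, hd, -⟩ := hq.2 a
    rw [ha] at hd
    have hdp : q d ∉ p '' {i}ᶜ := by
      rintro ⟨j, hj, hjd⟩
      rw [← hjd, hσ, hinv] at hd
      exact hj hd
    rwa [Set.eq_of_mem_singleton (hx ▸ ⟨⟨d, rfl⟩, hdp⟩ : q d ∈ ({x} : Set P))] at hd

end Exactness

end PolarGeo

open PolarGeo

/-- Proposition 3 (type D, `k ≤ n-2`): `𝓑(-i)` is exact. -/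
theorem minus_exact_typeD
    {P : Type*} {n : ℕ} (Pol : PolarSpace P n) (hn : 3 ≤ n)
    (hD : TypeD Pol.lines n) (k : ℕ) (hk : k ≤ n - 2)
    (p : Fin (2 * n) → P) (hp : IsBase Pol.lines p) (i : Fin (2 * n)) :
    IsExact Pol.lines n (k : ℤ) (baseSubset Pol.lines p (k : ℤ))
      (minus (baseSubset Pol.lines p (k : ℤ)) (p i)) := by
  have hn0 : n ≠ 0 := by omega
  obtain ⟨σ, hσ⟩ := hp.exists_opposition
  refine ⟨fun S hS => hS.1, fun q hq hsub => ?_⟩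
  obtain ⟨τ, hτ⟩ := hq.exists_opposition
  have hcover : p '' {i}ᶜ ⊆ Set.range q := by
    rintro _ ⟨j, hj, rfl⟩
    exact mem_range_of_minus_subset hσ hn0 (by omega) hτ hsub hj
  obtain ⟨x, hx⟩ := exists_range_sdiff_eq_singleton hp.1 hq.1 hn0 hcover
  have hrange : Set.range q = Set.range p := by
    rw [← Set.sdiff_union_of_subset hcover, hx,
      eq_of_range_sdiff_eq_singleton hD hσ hn0 hq hcover hx, ← Set.image_singleton, ← Set.image_union, Set.union_compl_self, Set.image_univ]
  exact (baseSubset_subset_of_range_subset hrange.le _).antisymm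
    (baseSubset_subset_of_range_subset hrange.ge _)
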